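/- Let n ≥ 4 be even, let m ≥ 1, let x¹,…,xⁿ ∈ ℝ^m, and set d_{ij} = ‖xⁱ − xʲ‖²₂. Suppose that for every l ∈ {1,2} and all distinct i, j ∈ C_l one has (2/n)∑_{k∈[n]∖C_l} min{d_{ik} + d^in_j, d_{jk} + d^in_i} − d_{ij} ≥ η. Then the planted ratio-cut matrix X̄ is an optimal solution of LP2, i.e., ∑_{i,j∈[n]} d_{ij} X̄_{ij} ≤ ∑_{i,j∈[n]} d_{ij} X_{ij} for every matrix X in the feasible region of LP2. -/

import Mathlib

/-- First planted cluster: `C₁ = {1, …, n/2}` (as indices `i` with `i < n/2`). -/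
def Cone (n : ℕ) : Finset (Fin n) := Finset.univ.filter fun i => (i : ℕ) < n / 2

/-- Second planted cluster: `C₂ = {n/2 + 1, …, n}`. -/
def Ctwo (n : ℕ) : Finset (Fin n) := Finset.univ.filter fun i => n / 2 ≤ (i : ℕ)

/-- `d^in_i = (2/n) ∑_{j ∈ C_l} d_{ij}` for `i ∈ C_l`. -/
noncomputable def din (n : ℕ) (d : Fin n → Fin n → ℝ) (i : Fin n) : ℝ :=
  if (i : ℕ) < n / 2 then (2 / (n : ℝ)) * ∑ j ∈ Cone n, d i j
  else (2 / (n : ℝ)) * ∑ j ∈ Ctwo n, d i j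

/-- `η = ½ ((2/n) ∑_{i ∈ C₁} d^in_i + (2/n) ∑_{i ∈ C₂} d^in_i)`. -/
noncomputable def etaConst (n : ℕ) (d : Fin n → Fin n → ℝ) : ℝ :=
  (1 / 2) * ((2 / (n : ℝ)) * ∑ i ∈ Cone n, din n d i +
    (2 / (n : ℝ)) * ∑ i ∈ Ctwo n, din n d i)

/-- Feasible region of the LP relaxation (LP2): symmetric `X` with `Tr X = 2`, unit
row sums, and the generalized triangle inequalities. -/
def LP2Feasible (n : ℕ) (X : Fin n → Fin n → ℝ) : Prop :=
  (∀ i j, X i j = X j i) ∧ (∑ i, X i i = 2) ∧ (∀ i, ∑ j, X i j = 1) ∧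
    ∀ i j k : Fin n, i ≠ j → i ≠ k → j ≠ k → X i j + X i k ≤ X i i + X j k

/-- The planted ratio-cut matrix: `X̄_{ij} = 2/n` if `i, j` lie in the same planted
cluster (including `i = j`) and `0` otherwise. -/
noncomputable def plantedX (n : ℕ) : Fin n → Fin n → ℝ := fun i j =>
  if ((i : ℕ) < n / 2 ↔ (j : ℕ) < n / 2) then 2 / (n : ℝ) else 0

/-!
Weak LP duality with an explicit dual certificate. For distinct `p, r` in one cluster `A` and
`k` in the other cluster `B`, the triangle inequality `X p r + X p k ≤ X p p + X r k` gets a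
multiplier that is nonnegative precisely because of the hypothesis on `p, r`. On the affine
space cut out by symmetry, the trace and the row sums, the LP objective equals the planted cost
plus the multiplier-weighted sum of these triangle slacks, and every slack is nonnegative on the
feasible region.
-/

namespace RatioCutLP

open Finset

lemma posPart_sub_eq_sub_min {α : Type*} [AddCommGroup α] [LinearOrder α]
    [IsOrderedAddMonoid α] (a b : α) : (b - a)⁺ = b - min a b := by
  rcases le_total a b with h | h <;> simp [h]

variable {ι : Type*}

section DualCertificate

variable (c : ℝ) (d : ι → ι → ℝ) (A B : Finset ι)

noncomputable def avgDist (i : ι) : ℝ := c * ∑ j ∈ A, d i j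

noncomputable def pairSlack (η : ℝ) (p r : ι) : ℝ :=
  c * ∑ k ∈ B, min (d p k + avgDist c d A r) (d r k + avgDist c d A p) - η - d p r

/-- The positive part makes the sum over `k ∈ B` independent of the `min` in `pairSlack`, while
the part antisymmetric in `(p, r)` stays linear in `d`. -/
noncomputable def dualWeight (η : ℝ) (p r k : ι) : ℝ :=
  c * ((d r k + avgDist c d A p - (d p k + avgDist c d A r))⁺ + pairSlack c d A B η p r)

noncomputable def dualPairing (η : ℝ) (X : ι → ι → ℝ) : ℝ :=
  ∑ p ∈ A, ∑ r ∈ A, ∑ k ∈ B, dualWeight c d A B η p r k * (X p p + X r k - X p r - X p k)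

noncomputable def plantedCost : ℝ :=
  ∑ p ∈ A, avgDist c d A p + ∑ p ∈ B, avgDist c d B p

lemma sum_mul_triangle_eq (w : ι → ι → ι → ℝ) (X : ι → ι → ℝ) :
    ∑ p ∈ A, ∑ r ∈ A, ∑ k ∈ B, w p r k * (X p p + X r k - X p r - X p k) =
      ∑ p ∈ A, ∑ r ∈ A, (∑ k ∈ B, w p r k) * (X p p - X p r) +
        ∑ p ∈ A, ∑ k ∈ B, (∑ r ∈ A, (w r p k - w p r k)) * X p k := by
  have swap : ∑ p ∈ A, ∑ r ∈ A, ∑ k ∈ B, w p r k * X r k =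
      ∑ p ∈ A, ∑ k ∈ B, ∑ r ∈ A, w r p k * X p k := by
    rw [sum_comm]
    exact sum_congr rfl fun _ _ => sum_comm
  have reorder : ∑ p ∈ A, ∑ r ∈ A, ∑ k ∈ B, w p r k * X p k =
      ∑ p ∈ A, ∑ k ∈ B, ∑ r ∈ A, w p r k * X p k :=
    sum_congr rfl fun _ _ => sum_comm
  simp only [sum_mul, sub_mul, sum_sub_distrib] at swap reorder ⊢
  simp only [mul_add, mul_sub, sum_add_distrib, sum_sub_distrib, swap, ← reorder]
  ring

variable {c A B}

lemma sum_dualWeight (hB : c * #B = 1) (η : ℝ) (p r : ι) :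
    ∑ k ∈ B, dualWeight c d A B η p r k =
      avgDist c d B r + avgDist c d A p - η - d p r := by
  simp only [dualWeight, posPart_sub_eq_sub_min, ← mul_sum, sum_add_distrib,
    sum_sub_distrib, sum_const, nsmul_eq_mul, pairSlack]
  rw [show avgDist c d B r = c * ∑ k ∈ B, d r k from rfl]
  linear_combination (avgDist c d A p - η - d p r +
    c * ∑ k ∈ B, min (d p k + avgDist c d A r) (d r k + avgDist c d A p)) * hB

lemma dualWeight_sub_dualWeight_swap (hd : ∀ i j, d i j = d j i) (η : ℝ) (p r k : ι) :
    dualWeight c d A B η p r k - dualWeight c d A B η r p k =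
      c * (d r k + avgDist c d A p - (d p k + avgDist c d A r)) := by
  have hslack : pairSlack c d A B η p r = pairSlack c d A B η r p := by
    simp only [pairSlack, hd p r, min_comm]
  rw [dualWeight, dualWeight, hslack, ← mul_sub, add_sub_add_right_eq_sub,
    ← neg_sub (d r k + avgDist c d A p), posPart_neg, posPart_sub_negPart]

lemma sum_dualWeight_swap_sub (hd : ∀ i j, d i j = d j i) (hA : c * #A = 1) (η : ℝ) (p k : ι) :
    ∑ r ∈ A, (dualWeight c d A B η r p k - dualWeight c d A B η p r k) =
      d p k + c * ∑ r ∈ A, avgDist c d A r - avgDist c d A k - avgDist c d A p := by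
  simp only [dualWeight_sub_dualWeight_swap d hd, ← mul_sum, sum_sub_distrib, sum_add_distrib,
    sum_const, nsmul_eq_mul]
  rw [show avgDist c d A k = c * ∑ r ∈ A, d r k by simp only [avgDist, hd k]]
  linear_combination (d p k - avgDist c d A p) * hA

lemma dualPairing_eq (hd : ∀ i j, d i j = d j i) (hA : c * #A = 1) (hB : c * #B = 1)
    (η : ℝ) (X : ι → ι → ℝ) :
    dualPairing c d A B η X =
      ∑ p ∈ A, ∑ r ∈ A, (avgDist c d B r + avgDist c d A p - η - d p r) * (X p p - X p r) +
        ∑ p ∈ A, ∑ k ∈ B,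
          (d p k + c * ∑ r ∈ A, avgDist c d A r - avgDist c d A k - avgDist c d A p) * X p k := by
  simp only [dualPairing, sum_mul_triangle_eq, sum_dualWeight d hB, sum_dualWeight_swap_sub d hd hA]

lemma dualPairing_eq_of_rowSum (hd : ∀ i j, d i j = d j i) (hA : c * #A = 1)
    (hB : c * #B = 1) (η : ℝ) {X : ι → ι → ℝ}
    (hrow : ∀ p ∈ A, ∑ j ∈ A, X p j + ∑ j ∈ B, X p j = 1) :
    dualPairing c d A B η X = ∑ p ∈ A,
      ((∑ j ∈ A, d p j * X p j + ∑ j ∈ B, d p j * X p j) - avgDist c d A p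
        + (∑ r ∈ A, avgDist c d B r - #A * η) * X p p
        - (∑ j ∈ A, avgDist c d B j * X p j + ∑ j ∈ B, avgDist c d A j * X p j)
        + η * ∑ j ∈ A, X p j + c * (∑ r ∈ A, avgDist c d A r) * ∑ j ∈ B, X p j) := by
  have hrowA : ∀ p, ∑ r ∈ A, d p r = #A * avgDist c d A p := fun p => by
    rw [avgDist, ← mul_assoc, mul_comm _ c, hA, one_mul]
  rw [dualPairing_eq d hd hA hB, ← sum_add_distrib]
  refine sum_congr rfl fun p hp => ?_
  simp only [mul_sub, sub_mul, add_mul, sum_sub_distrib, sum_add_distrib, ← sum_mul, ← mul_sum,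
    sum_const, nsmul_eq_mul, hrowA]
  linear_combination (- avgDist c d A p) * hrow p hp

lemma sum_sum_eq_of_isCompl [Fintype ι] (hAB : IsCompl A B) (f : ι → ι → ℝ) :
    ∑ i, ∑ j, f i j =
      ∑ p ∈ A, ∑ j ∈ A, f p j + ∑ p ∈ A, ∑ j ∈ B, f p j +
        (∑ p ∈ B, ∑ j ∈ B, f p j + ∑ p ∈ B, ∑ j ∈ A, f p j) := by
  simp only [← hAB.sum_add_sum, sum_add_distrib]
  ring

lemma sum_sum_mul_add_sum_sum_mul_of_colSum [Fintype ι] (hAB : IsCompl A B)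
    {X : ι → ι → ℝ} (hcol : ∀ j, ∑ p, X p j = 1) (g : ι → ℝ) (C : Finset ι) :
    ∑ p ∈ A, ∑ j ∈ C, g j * X p j + ∑ p ∈ B, ∑ j ∈ C, g j * X p j = ∑ j ∈ C, g j := by
  rw [hAB.sum_add_sum, sum_comm]
  simp only [← mul_sum, hcol, mul_one]

theorem objective_eq_plantedCost_add_dualPairing [Fintype ι] (hAB : IsCompl A B)
    (hd : ∀ i j, d i j = d j i) (hA : c * #A = 1) (hB : c * #B = 1) {η : ℝ}
    (hη : η = c / 2 * plantedCost c d A B) {X : ι → ι → ℝ} (hX : ∀ i j, X i j = X j i)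
    (htrace : ∑ i, X i i = 2) (hrow : ∀ i, ∑ j, X i j = 1) :
    ∑ i, ∑ j, d i j * X i j =
      plantedCost c d A B + dualPairing c d A B η X + dualPairing c d B A η X := by
  have hrowAB : ∀ p, ∑ j ∈ A, X p j + ∑ j ∈ B, X p j = 1 := fun p => by
    rw [hAB.sum_add_sum, hrow]
  have hcol : ∀ j, ∑ p, X p j = 1 := fun j => by simp only [hX _ j, hrow]
  have hcolSum := sum_sum_mul_add_sum_sum_mul_of_colSum hAB hcol
  have hcard : (#A : ℝ) = #B := by linear_combination (#B : ℝ) * hA - (#A : ℝ) * hB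
  have hcross : ∑ r ∈ A, avgDist c d B r = ∑ r ∈ B, avgDist c d A r := by
    simp only [avgDist, ← mul_sum]
    rw [sum_comm]
    simp only [hd]
  have hmass : ∑ p ∈ A, ∑ j ∈ B, X p j = ∑ p ∈ B, ∑ j ∈ A, X p j := by
    rw [sum_comm]
    simp only [hX]
  have hmassA : ∑ p ∈ A, ∑ j ∈ A, X p j + ∑ p ∈ A, ∑ j ∈ B, X p j = #A := by
    simp [← sum_add_distrib, hrowAB]
  have hmassB : ∑ p ∈ B, ∑ j ∈ B, X p j + ∑ p ∈ B, ∑ j ∈ A, X p j = #B := by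
    simp [← sum_add_distrib, add_comm (∑ j ∈ B, X _ j), hrowAB]
  have htr : ∑ p ∈ A, X p p + ∑ p ∈ B, X p p = 2 := by rw [hAB.sum_add_sum, htrace]
  rw [dualPairing_eq_of_rowSum d hd hA hB η fun p _ => hrowAB p,
    dualPairing_eq_of_rowSum d hd hB hA η fun p _ => by rw [add_comm, hrowAB p],
    sum_sum_eq_of_isCompl hAB]
  simp only [sum_add_distrib, sum_sub_distrib, ← mul_sum, plantedCost] at hη ⊢
  linear_combination - (∑ r ∈ A, avgDist c d B r - #A * η) * htr
    + hcolSum (avgDist c d B) A + hcolSum (avgDist c d A) B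
    - η * hmassA - η * hmassB + 2 * (∑ p ∈ A, ∑ j ∈ B, X p j) * hη
    + (∑ p ∈ B, X p p - 1) * hcross + η * (1 - ∑ p ∈ B, X p p) * hcard
    + (c * ∑ r ∈ B, avgDist c d B r - η) * hmass

lemma dualPairing_nonneg (hc : 0 ≤ c) (hAB : Disjoint A B) {η : ℝ}
    (hslack : ∀ p ∈ A, ∀ r ∈ A, p ≠ r → 0 ≤ pairSlack c d A B η p r) {X : ι → ι → ℝ}
    (htri : ∀ i j k, i ≠ j → i ≠ k → j ≠ k → X i j + X i k ≤ X i i + X j k) :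
    0 ≤ dualPairing c d A B η X := by
  refine sum_nonneg fun p hp => sum_nonneg fun r hr => sum_nonneg fun k hk => ?_
  obtain rfl | hpr := eq_or_ne p r
  · simp
  have hweight : 0 ≤ dualWeight c d A B η p r k :=
    mul_nonneg hc (add_nonneg (posPart_nonneg _) (hslack p hp r hr hpr))
  have htriangle := htri p r k hpr (ne_of_mem_of_not_mem hk (disjoint_left.mp hAB hp)).symm
    (ne_of_mem_of_not_mem hk (disjoint_left.mp hAB hr)).symm
  exact mul_nonneg hweight (by linarith)

theorem plantedCost_le_objective [Fintype ι] (hAB : IsCompl A B) (hd : ∀ i j, d i j = d j i)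
    (hA : c * #A = 1) (hB : c * #B = 1) {η : ℝ} (hη : η = c / 2 * plantedCost c d A B)
    (hslackA : ∀ p ∈ A, ∀ r ∈ A, p ≠ r → 0 ≤ pairSlack c d A B η p r)
    (hslackB : ∀ p ∈ B, ∀ r ∈ B, p ≠ r → 0 ≤ pairSlack c d B A η p r)
    {X : ι → ι → ℝ} (hX : ∀ i j, X i j = X j i) (htrace : ∑ i, X i i = 2)
    (hrow : ∀ i, ∑ j, X i j = 1)
    (htri : ∀ i j k, i ≠ j → i ≠ k → j ≠ k → X i j + X i k ≤ X i i + X j k) :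
    plantedCost c d A B ≤ ∑ i, ∑ j, d i j * X i j := by
  have hc : 0 ≤ c := (pos_of_mul_pos_left (hA ▸ one_pos) (Nat.cast_nonneg _)).le
  rw [objective_eq_plantedCost_add_dualPairing d hAB hd hA hB hη hX htrace hrow]
  linarith [dualPairing_nonneg d hc hAB.disjoint hslackA htri,
    dualPairing_nonneg d hc hAB.disjoint.symm hslackB htri]

end DualCertificate

section PlantedClusters

lemma ctwo_eq_compl_cone (n : ℕ) : Ctwo n = (Cone n)ᶜ := by
  ext i
  simp [Cone, Ctwo]

lemma isCompl_cone_ctwo (n : ℕ) : IsCompl (Cone n) (Ctwo n) :=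
  ctwo_eq_compl_cone n ▸ isCompl_compl

lemma card_cone (n : ℕ) : #(Cone n) = n / 2 := by
  rw [Cone, Fin.card_filter_val_lt]
  omega

lemma card_ctwo (n : ℕ) : #(Ctwo n) = n - n / 2 := by
  rw [ctwo_eq_compl_cone, card_compl, Fintype.card_fin, card_cone]

variable {n : ℕ}

lemma two_div_mul_half_eq_one (hn : n ≠ 0) (he : Even n) : 2 / (n : ℝ) * (n / 2 : ℕ) = 1 := by
  obtain ⟨k, rfl⟩ := he
  have hk : (k : ℝ) ≠ 0 := by exact_mod_cast (by omega : k ≠ 0)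
  rw [show (k + k) / 2 = k by omega]
  push_cast
  field_simp
  ring

lemma two_div_mul_card_cone (hn : n ≠ 0) (he : Even n) : 2 / (n : ℝ) * #(Cone n) = 1 := by
  rw [card_cone, two_div_mul_half_eq_one hn he]

lemma two_div_mul_card_ctwo (hn : n ≠ 0) (he : Even n) : 2 / (n : ℝ) * #(Ctwo n) = 1 := by
  rw [card_ctwo, show n - n / 2 = n / 2 by obtain ⟨k, rfl⟩ := he; omega,
    two_div_mul_half_eq_one hn he]

variable (d : Fin n → Fin n → ℝ)

lemma din_of_mem_cone {i : Fin n} (hi : i ∈ Cone n) :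
    din n d i = avgDist (2 / n) d (Cone n) i := by
  rw [din, if_pos (by simpa [Cone] using hi), avgDist]

lemma din_of_mem_ctwo {i : Fin n} (hi : i ∈ Ctwo n) :
    din n d i = avgDist (2 / n) d (Ctwo n) i := by
  rw [din, if_neg (by simpa [Ctwo] using hi), avgDist]

lemma sum_mul_plantedX (i : Fin n) : ∑ j, d i j * plantedX n i j = din n d i := by
  by_cases hi : (i : ℕ) < n / 2 <;>
    simp [plantedX, din, Cone, Ctwo, hi, sum_filter, mul_sum, mul_comm]

lemma sum_din_eq_plantedCost : ∑ i, din n d i = plantedCost (2 / n) d (Cone n) (Ctwo n) := by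
  rw [← (isCompl_cone_ctwo n).sum_add_sum, plantedCost,
    sum_congr rfl fun i => din_of_mem_cone d, sum_congr rfl fun i => din_of_mem_ctwo d]

lemma etaConst_eq_plantedCost :
    etaConst n d = 2 / n / 2 * plantedCost (2 / n) d (Cone n) (Ctwo n) := by
  rw [etaConst, plantedCost, ← sum_congr rfl fun i => din_of_mem_cone d,
    ← sum_congr rfl fun i => din_of_mem_ctwo d]
  ring

theorem plantedX_isOptimal (hn : n ≠ 0) (he : Even n) (hd : ∀ i j, d i j = d j i)
    (hcond : ∀ i j : Fin n, i ≠ j →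
      ((i ∈ Cone n ∧ j ∈ Cone n) ∨ (i ∈ Ctwo n ∧ j ∈ Ctwo n)) →
      etaConst n d ≤
        (2 / (n : ℝ)) *
            (∑ k ∈ (if (i : ℕ) < n / 2 then Ctwo n else Cone n),
              min (d i k + din n d j) (d j k + din n d i))
          - d i j)
    (X : Fin n → Fin n → ℝ) (hX : LP2Feasible n X) :
    ∑ i, ∑ j, d i j * plantedX n i j ≤ ∑ i, ∑ j, d i j * X i j := by
  obtain ⟨hXsymm, htrace, hrow, htri⟩ := hX
  have hslackCone : ∀ p ∈ Cone n, ∀ r ∈ Cone n, p ≠ r →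
      0 ≤ pairSlack (2 / n) d (Cone n) (Ctwo n) (etaConst n d) p r := by
    intro p hp r hr hpr
    have h := hcond p r hpr (Or.inl ⟨hp, hr⟩)
    rw [if_pos (by simpa [Cone] using hp), din_of_mem_cone d hp, din_of_mem_cone d hr] at h
    rw [pairSlack]
    linarith
  have hslackCtwo : ∀ p ∈ Ctwo n, ∀ r ∈ Ctwo n, p ≠ r →
      0 ≤ pairSlack (2 / n) d (Ctwo n) (Cone n) (etaConst n d) p r := by
    intro p hp r hr hpr
    have h := hcond p r hpr (Or.inr ⟨hp, hr⟩)
    rw [if_neg (by simpa [Ctwo] using hp), din_of_mem_ctwo d hp, din_of_mem_ctwo d hr] at h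
    rw [pairSlack]
    linarith
  simp only [sum_mul_plantedX, sum_din_eq_plantedCost]
  exact plantedCost_le_objective d (isCompl_cone_ctwo n) hd (two_div_mul_card_cone hn he)
    (two_div_mul_card_ctwo hn he) (etaConst_eq_plantedCost d) hslackCone hslackCtwo hXsymm htrace
    hrow htri

end PlantedClusters

end RatioCutLP

theorem stmt11_general (n m : ℕ) (hn : 4 ≤ n) (hne : Even n)
    (x : Fin n → EuclideanSpace ℝ (Fin m))
    (hcond : ∀ i j : Fin n, i ≠ j →
      ((i ∈ Cone n ∧ j ∈ Cone n) ∨ (i ∈ Ctwo n ∧ j ∈ Ctwo n)) →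
      etaConst n (fun a b => ‖x a - x b‖ ^ 2) ≤
        (2 / (n : ℝ)) *
            (∑ k ∈ (if (i : ℕ) < n / 2 then Ctwo n else Cone n),
              min (‖x i - x k‖ ^ 2 + din n (fun a b => ‖x a - x b‖ ^ 2) j)
                  (‖x j - x k‖ ^ 2 + din n (fun a b => ‖x a - x b‖ ^ 2) i))
          - ‖x i - x j‖ ^ 2) :
    ∀ X : Fin n → Fin n → ℝ, LP2Feasible n X →
      ∑ i, ∑ j, ‖x i - x j‖ ^ 2 * plantedX n i j ≤
        ∑ i, ∑ j, ‖x i - x j‖ ^ 2 * X i j :=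
  RatioCutLP.plantedX_isOptimal (fun a b => ‖x a - x b‖ ^ 2) (by omega) hne
    (fun a b => by rw [norm_sub_rev]) hcond

/-- if for every l ∈ {1,2} and all distinct i, j ∈ C_l one has
(2/n) ∑_{k ∉ C_l} min{d_{ik} + d^in_j, d_{jk} + d^in_i} − d_{ij} ≥ η, where
d_{ij} = ‖xⁱ − xʲ‖², then the planted ratio-cut matrix is an optimal solution of
LP2, i.e. its objective value is at most that of every feasible X. -/
theorem stmt11 (n m : ℕ) (hn : 4 ≤ n) (hne : Even n) (hm : 1 ≤ m)
    (x : Fin n → EuclideanSpace ℝ (Fin m))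
    (hcond : ∀ i j : Fin n, i ≠ j →
      ((i ∈ Cone n ∧ j ∈ Cone n) ∨ (i ∈ Ctwo n ∧ j ∈ Ctwo n)) →
      etaConst n (fun a b => ‖x a - x b‖ ^ 2) ≤
        (2 / (n : ℝ)) *
            (∑ k ∈ (if (i : ℕ) < n / 2 then Ctwo n else Cone n),
              min (‖x i - x k‖ ^ 2 + din n (fun a b => ‖x a - x b‖ ^ 2) j)
                  (‖x j - x k‖ ^ 2 + din n (fun a b => ‖x a - x b‖ ^ 2) i))
          - ‖x i - x j‖ ^ 2) :
    ∀ X : Fin n → Fin n → ℝ, LP2Feasible n X →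
      ∑ i, ∑ j, ‖x i - x j‖ ^ 2 * plantedX n i j ≤
        ∑ i, ∑ j, ‖x i - x j‖ ^ 2 * X i j :=
  stmt11_general n m hn hne x hcond
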